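/- Let A ∈ GL(n, ℤ) and let φ : B_r → ℂⁿ be symplectic and Λ_A-equivariant with φ(0) = 0. Then the momentum maps intertwine affinely: μ(φ(z)) = (Aᵀ)⁻¹(μ(z)) for all z ∈ B_r, where Aᵀ denotes the transpose of A acting on ℝⁿ via the canonical inclusion GL(n, ℤ) → GL(n, ℝ). -/

import Mathlib

open scoped BigOperators

/-- The standard symplectic form on `ℂⁿ`: `ω₀(u, v) = ∑ₖ Im(conj(uₖ)·vₖ)`. -/
noncomputable def omega0 (n : ℕ) (u v : EuclideanSpace ℂ (Fin n)) : ℝ :=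
  ∑ k, ((starRingEnd ℂ) (u k) * v k).im

/-- The componentwise rotation action of the `n`-torus `Tⁿ = (S¹)ⁿ` on `ℂⁿ`. -/
def torusSMul (n : ℕ) (t : Fin n → Circle) (z : EuclideanSpace ℂ (Fin n)) :
    EuclideanSpace ℂ (Fin n) :=
  WithLp.toLp 2 (fun k => (t k : ℂ) * z k)

/-- For `A ∈ GL(n, ℤ)`, the induced torus automorphism `Λ_A(t)ᵢ = ∏ⱼ tⱼ^{Aᵢⱼ}`. -/
noncomputable def torusAut (n : ℕ) (A : GL (Fin n) ℤ) (t : Fin n → Circle) : Fin n → Circle :=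
  fun i => ∏ j, t j ^ ((A : Matrix (Fin n) (Fin n) ℤ) i j)

/-- `φ` is symplectic on the closed ball of radius `r`: it is `C^∞` there and its
Fréchet derivative (within the ball) preserves `ω₀` at every point. -/
noncomputable def IsSymplecticOn (n : ℕ) (r : ℝ)
    (φ : EuclideanSpace ℂ (Fin n) → EuclideanSpace ℂ (Fin n)) : Prop :=
  ContDiffOn ℝ (⊤ : ℕ∞) φ (Metric.closedBall 0 r) ∧
    ∀ z ∈ Metric.closedBall (0 : EuclideanSpace ℂ (Fin n)) r, ∀ u v,
      omega0 n (fderivWithin ℝ φ (Metric.closedBall 0 r) z u)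
        (fderivWithin ℝ φ (Metric.closedBall 0 r) z v) = omega0 n u v

/-- `φ` is `Λ_A`-equivariant on the closed ball of radius `r`. -/
def IsEquivariantOn (n : ℕ) (r : ℝ) (A : GL (Fin n) ℤ)
    (φ : EuclideanSpace ℂ (Fin n) → EuclideanSpace ℂ (Fin n)) : Prop :=
  ∀ t : Fin n → Circle, ∀ z ∈ Metric.closedBall (0 : EuclideanSpace ℂ (Fin n)) r,
    φ (torusSMul n t z) = torusSMul n (torusAut n A t) (φ z)

open Complex

lemma circle_exp_zpow (x : ℝ) (m : ℤ) : Circle.exp x ^ m = Circle.exp (m * x) := by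
  induction m using Int.induction_on with
  | zero => simp
  | succ k ih => rw [zpow_add_one, ih, ← Circle.exp_add]; congr 1; push_cast; ring
  | pred k ih => rw [zpow_sub_one, ih, ← Circle.exp_neg, ← Circle.exp_add]; congr 1; push_cast; ring

lemma circle_exp_prod {ι : Type*} (s : Finset ι) (f : ι → ℝ) :
    ∏ j ∈ s, Circle.exp (f j) = Circle.exp (∑ j ∈ s, f j) := by
  induction s using Finset.cons_induction with
  | empty => simp
  | cons a s ha ih => rw [Finset.prod_cons, Finset.sum_cons, ih, Circle.exp_add]

lemma hasFDerivAt_normSq' (w : ℂ) :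
    HasFDerivAt Complex.normSq (w.re • (2 : ℝ) • Complex.reCLM + w.im • (2:ℝ) • Complex.imCLM) w := by
  have h1 := ((Complex.reCLM.hasFDerivAt (x := w)).mul (Complex.reCLM.hasFDerivAt (x := w))).add
      ((Complex.imCLM.hasFDerivAt (x := w)).mul (Complex.imCLM.hasFDerivAt (x := w)))
  have h2 : HasFDerivAt (⇑Complex.normSq)
      (reCLM w • reCLM + reCLM w • reCLM + (imCLM w • imCLM + imCLM w • imCLM)) w := by
    refine h1.congr_of_eventuallyEq ?_
    filter_upwards with z
    simp [Complex.normSq_apply]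
  convert h2 using 1
  ext v
  simp [two_smul]

lemma omega0_formula (n : ℕ) (ξ : Fin n → ℝ) (w v u : EuclideanSpace ℂ (Fin n))
    (hu : ∀ k, u k = (ξ k : ℂ) * Complex.I * w k) :
    omega0 n u v = -∑ k, ξ k * ((starRingEnd ℂ) (w k) * v k).re := by
  unfold omega0
  rw [← Finset.sum_neg_distrib]
  refine Finset.sum_congr rfl fun k _ => ?_
  rw [hu k]
  simp only [map_mul, Complex.conj_ofReal, Complex.conj_I]
  simp [Complex.mul_im, Complex.mul_re]
  ring


lemma hasDerivAt_circleCurve (n : ℕ) (η : Fin n → ℝ) (w : EuclideanSpace ℂ (Fin n))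
    (c : ℝ → EuclideanSpace ℂ (Fin n)) (hc : ∀ s k, c s k = (Circle.exp (s * η k) : ℂ) * w k)
    (V : EuclideanSpace ℂ (Fin n)) (hV : ∀ k, V k = (η k : ℂ) * Complex.I * w k) :
    HasDerivAt c V 0 := by
  have h0 : HasDerivAt (fun s : ℝ => (fun k => (Circle.exp (s * η k) : ℂ) * w k : Fin n → ℂ))
      (fun k => (η k : ℂ) * Complex.I * w k) 0 := by
    rw [hasDerivAt_pi]
    intro k
    have h1 : HasDerivAt (fun s : ℝ => ((s * η k : ℝ) : ℂ)) ((η k : ℂ)) 0 := by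
      simpa using ((hasDerivAt_id (0:ℝ)).mul_const (η k)).ofReal_comp
    have h2 := (h1.mul_const Complex.I).cexp.mul_const (w k)
    simp only [Circle.coe_exp]
    exact h2.congr_deriv (by simp [mul_comm, mul_assoc, mul_left_comm])
  have hL := ((PiLp.continuousLinearEquiv 2 ℝ (fun _ : Fin n => ℂ)).symm :
      (Fin n → ℂ) →L[ℝ] EuclideanSpace ℂ (Fin n)).hasFDerivAt.comp_hasDerivAt 0 h0
  have hfun : (((PiLp.continuousLinearEquiv 2 ℝ (fun _ : Fin n => ℂ)).symm :
      (Fin n → ℂ) →L[ℝ] EuclideanSpace ℂ (Fin n)) : (Fin n → ℂ) → EuclideanSpace ℂ (Fin n)) ∘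
      (fun s : ℝ => (fun k => (Circle.exp (s * η k) : ℂ) * w k : Fin n → ℂ)) = c := by
    funext s; ext k; exact (hc s k).symm
  have hv' : (((PiLp.continuousLinearEquiv 2 ℝ (fun _ : Fin n => ℂ)).symm :
      (Fin n → ℂ) →L[ℝ] EuclideanSpace ℂ (Fin n)) (fun k => (η k : ℂ) * Complex.I * w k)) = V := by
    ext k; exact (hV k).symm
  rw [hfun, hv'] at hL
  exact hL

lemma key_infinitesimal (n : ℕ) (r : ℝ) (A : GL (Fin n) ℤ)
    (φ : EuclideanSpace ℂ (Fin n) → EuclideanSpace ℂ (Fin n))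
    (hsymp : IsSymplecticOn n r φ) (hequiv : IsEquivariantOn n r A φ)
    (w : EuclideanSpace ℂ (Fin n)) (hw : w ∈ Metric.closedBall (0 : EuclideanSpace ℂ (Fin n)) r)
    (ξ : Fin n → ℝ) (V : EuclideanSpace ℂ (Fin n))
    (hV : ∀ k, V k = (ξ k : ℂ) * Complex.I * w k) :
    ∀ k, fderivWithin ℝ φ (Metric.closedBall 0 r) w V k
      = ((∑ j, ((A : Matrix (Fin n) (Fin n) ℤ) k j : ℝ) * ξ j : ℝ) : ℂ) * Complex.I * φ w k := by
  set B := Metric.closedBall (0 : EuclideanSpace ℂ (Fin n)) r with hB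
  have hdiff : DifferentiableOn ℝ φ B := hsymp.1.differentiableOn (by simp)
  set t : ℝ → Fin n → Circle := fun s k => Circle.exp (s * ξ k) with ht
  set c : ℝ → EuclideanSpace ℂ (Fin n) := fun s => torusSMul n (t s) w with hc
  have hck : ∀ s k, c s k = (Circle.exp (s * ξ k) : ℂ) * w k := fun s k => rfl
  have hc0 : c 0 = w := by
    ext k; rw [hck 0 k]; simp
  have hmaps : ∀ s, c s ∈ B := by
    intro s
    rw [hB, Metric.mem_closedBall, dist_zero_right]
    have hnorm : ‖c s‖ = ‖w‖ := by
      rw [EuclideanSpace.norm_eq, EuclideanSpace.norm_eq]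
      congr 1
      refine Finset.sum_congr rfl fun k _ => ?_
      rw [hck s k, norm_mul]
      have h1 : ‖(Circle.exp (s * ξ k) : ℂ)‖ = 1 := by
        exact Circle.norm_coe _
      rw [h1, one_mul]
    rw [hnorm, ← dist_zero_right]
    exact hw
  have hcder : HasDerivAt c V 0 := hasDerivAt_circleCurve n ξ w c hck V hV
  have hφc : HasDerivAt (φ ∘ c) (fderivWithin ℝ φ B w V) 0 := by
    rw [← hasDerivWithinAt_univ]
    have hφ : HasFDerivWithinAt φ (fderivWithin ℝ φ B w) B (c 0) := by
      rw [hc0]; exact (hdiff w hw).hasFDerivWithinAt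
    exact hφ.comp_hasDerivWithinAt 0 hcder.hasDerivWithinAt (fun s _ => hmaps s)
  -- explicit form of φ ∘ c
  set η : Fin n → ℝ := fun k => ∑ j, ((A : Matrix (Fin n) (Fin n) ℤ) k j : ℝ) * ξ j with hη
  have hgk : ∀ s k, (φ ∘ c) s k = (Circle.exp (s * η k) : ℂ) * φ w k := by
    intro s k
    have := hequiv (t s) w hw
    show φ (torusSMul n (t s) w) k = _
    rw [this]
    show ((torusAut n A (t s) k : ℂ)) * φ w k = _
    congr 2
    unfold torusAut
    have : ∀ j : Fin n, t s j ^ ((A : Matrix (Fin n) (Fin n) ℤ) k j)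
        = Circle.exp (((A : Matrix (Fin n) (Fin n) ℤ) k j : ℝ) * (s * ξ j)) := by
      intro j; rw [ht]; exact circle_exp_zpow _ _
    rw [Finset.prod_congr rfl (fun j _ => this j), circle_exp_prod]
    congr 1
    rw [hη, Finset.mul_sum]
    refine Finset.sum_congr rfl fun j _ => by ring
  set V₁ : EuclideanSpace ℂ (Fin n) := WithLp.toLp 2 (fun k => (η k : ℂ) * Complex.I * φ w k) with hV₁
  have hgder : HasDerivAt (φ ∘ c) V₁ 0 :=
    hasDerivAt_circleCurve n η (φ w) (φ ∘ c) hgk V₁ (fun k => rfl)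
  have := hφc.unique hgder
  intro k
  rw [this]

/-- If `φ : B_r → ℂⁿ` is symplectic and `Λ_A`-equivariant with `φ(0) = 0`, then the
momentum maps intertwine affinely: `μ(φ(z)) = (Aᵀ)⁻¹(μ(z))` for all `z ∈ B_r`, where
`(Aᵀ)⁻¹ = (A⁻¹)ᵀ` acts on `ℝⁿ` via the canonical inclusion `GL(n, ℤ) → GL(n, ℝ)`. -/
theorem momentMap_intertwine (n : ℕ) (hn : 1 ≤ n) (r : ℝ) (hr : 0 < r)
    (A : GL (Fin n) ℤ) (φ : EuclideanSpace ℂ (Fin n) → EuclideanSpace ℂ (Fin n))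
    (hsymp : IsSymplecticOn n r φ) (hequiv : IsEquivariantOn n r A φ)
    (h0 : φ 0 = 0) :
    ∀ z ∈ Metric.closedBall (0 : EuclideanSpace ℂ (Fin n)) r, ∀ i,
      ‖φ z i‖ ^ 2
        = ∑ j, (((A⁻¹ : GL (Fin n) ℤ) : Matrix (Fin n) (Fin n) ℤ) j i : ℝ)
            * ‖z j‖ ^ 2 := by
  classical
  intro z hz i
  set B := Metric.closedBall (0 : EuclideanSpace ℂ (Fin n)) r with hB
  have hconv : Convex ℝ B := convex_closedBall _ _
  have hdiff : DifferentiableOn ℝ φ B := hsymp.1.differentiableOn (by simp)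
  set c : Fin n → ℝ :=
    fun j => (((A⁻¹ : GL (Fin n) ℤ) : Matrix (Fin n) (Fin n) ℤ) j i : ℝ) with hcdef
  -- delta identity
  have hδ : ∀ k, (∑ j, ((A : Matrix (Fin n) (Fin n) ℤ) k j : ℝ) * c j)
      = if k = i then 1 else 0 := by
    intro k
    have h2 : (∑ j, (A : Matrix (Fin n) (Fin n) ℤ) k j
        * ((A⁻¹ : GL (Fin n) ℤ) : Matrix (Fin n) (Fin n) ℤ) j i) = if k = i then 1 else 0 := by
      have hA : (A : Matrix (Fin n) (Fin n) ℤ)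
          * ((A⁻¹ : GL (Fin n) ℤ) : Matrix (Fin n) (Fin n) ℤ) = 1 := A.mul_inv
      have h3 := congrArg (fun M : Matrix (Fin n) (Fin n) ℤ => M k i) hA
      simpa [Matrix.mul_apply, Matrix.one_apply] using h3
    have h4 : (∑ j, ((A : Matrix (Fin n) (Fin n) ℤ) k j : ℝ) * c j)
        = ((∑ j, (A : Matrix (Fin n) (Fin n) ℤ) k j
            * ((A⁻¹ : GL (Fin n) ℤ) : Matrix (Fin n) (Fin n) ℤ) j i : ℤ) : ℝ) := by
      rw [Int.cast_sum]
      refine Finset.sum_congr rfl fun j _ => ?_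
      rw [Int.cast_mul]
    rw [h4, h2]
    split <;> simp
  -- pointwise key identity, for every point of the ball
  have hkeyid : ∀ w ∈ B, ∀ v : EuclideanSpace ℂ (Fin n),
      ((starRingEnd ℂ) (φ w i) * fderivWithin ℝ φ B w v i).re
        = ∑ j, c j * ((starRingEnd ℂ) (w j) * v j).re := by
    intro w hw v
    set u : EuclideanSpace ℂ (Fin n) := WithLp.toLp 2 (fun k => (c k : ℂ) * Complex.I * w k) with hu
    have hDu := key_infinitesimal n r A φ hsymp hequiv w hw c u (fun k => rfl)
    have hsym := hsymp.2 w hw u v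
    have hL : omega0 n (fderivWithin ℝ φ B w u) (fderivWithin ℝ φ B w v)
        = -∑ k, (if k = i then (1:ℝ) else 0)
            * ((starRingEnd ℂ) (φ w k) * fderivWithin ℝ φ B w v k).re := by
      refine omega0_formula n _ (φ w) _ _ ?_
      intro k
      rw [hDu k, hδ k]
    have hR : omega0 n u v = -∑ j, c j * ((starRingEnd ℂ) (w j) * v j).re :=
      omega0_formula n c w v u (fun k => rfl)
    rw [hL, hR] at hsym
    have h5 := neg_injective hsym
    rw [← h5]
    rw [Finset.sum_congr rfl (fun k _ => by
      rw [ite_mul, one_mul, zero_mul] :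
        ∀ k ∈ Finset.univ, (if k = i then (1:ℝ) else 0)
          * ((starRingEnd ℂ) (φ w k) * fderivWithin ℝ φ B w v k).re
          = if k = i then ((starRingEnd ℂ) (φ w k) * fderivWithin ℝ φ B w v k).re else 0)]
    rw [Finset.sum_ite_eq' Finset.univ i]
    simp
  -- F has zero derivative on B
  have hF : ∀ w ∈ B, HasFDerivWithinAt
      (fun y : EuclideanSpace ℂ (Fin n) =>
        Complex.normSq (φ y i) - ∑ j, c j * Complex.normSq (y j))
      (0 : EuclideanSpace ℂ (Fin n) →L[ℝ] ℝ) B w := by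
    intro w hw
    have hφi : HasFDerivWithinAt (fun y => φ y i)
        (((EuclideanSpace.proj i : EuclideanSpace ℂ (Fin n) →L[ℂ] ℂ).restrictScalars ℝ).comp
          (fderivWithin ℝ φ B w)) B w :=
      (((EuclideanSpace.proj i : EuclideanSpace ℂ (Fin n) →L[ℂ] ℂ).restrictScalars
        ℝ).hasFDerivAt).comp_hasFDerivWithinAt w (hdiff w hw).hasFDerivWithinAt
    have h2 := (hasFDerivAt_normSq' (φ w i)).comp_hasFDerivWithinAt w hφi
    have h3 : ∀ j : Fin n, HasFDerivWithinAt
        (fun y : EuclideanSpace ℂ (Fin n) => c j * Complex.normSq (y j))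
        (c j • (((w j).re • (2:ℝ) • Complex.reCLM + (w j).im • (2:ℝ) • Complex.imCLM).comp
          ((EuclideanSpace.proj j : EuclideanSpace ℂ (Fin n) →L[ℂ] ℂ).restrictScalars ℝ))) B w := by
      intro j
      have hbase := (hasFDerivAt_normSq' (w j)).comp_hasFDerivWithinAt w
        (((EuclideanSpace.proj j : EuclideanSpace ℂ (Fin n) →L[ℂ] ℂ).restrictScalars
          ℝ).hasFDerivAt.hasFDerivWithinAt (s := B))
      exact hbase.const_smul (c j)
    have hsum := HasFDerivWithinAt.sum (fun j (_ : j ∈ Finset.univ) => h3 j)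
    have hbig := h2.sub hsum
    have hzero : ((((φ w i).re • (2:ℝ) • Complex.reCLM + (φ w i).im • (2:ℝ) • Complex.imCLM).comp
        (((EuclideanSpace.proj i : EuclideanSpace ℂ (Fin n) →L[ℂ] ℂ).restrictScalars ℝ).comp
          (fderivWithin ℝ φ B w)))
        - ∑ j, c j • (((w j).re • (2:ℝ) • Complex.reCLM + (w j).im • (2:ℝ) • Complex.imCLM).comp
          ((EuclideanSpace.proj j : EuclideanSpace ℂ (Fin n) →L[ℂ] ℂ).restrictScalars ℝ)))
        = (0 : EuclideanSpace ℂ (Fin n) →L[ℝ] ℝ) := by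
      ext v
      have hk := hkeyid w hw v
      simp only [ContinuousLinearMap.coe_sub', Pi.sub_apply, ContinuousLinearMap.coe_comp',
        Function.comp_apply, ContinuousLinearMap.add_apply, ContinuousLinearMap.coe_smul',
        Pi.smul_apply, Complex.reCLM_apply, Complex.imCLM_apply, smul_eq_mul,
        ContinuousLinearMap.coe_sum', Finset.sum_apply, ContinuousLinearMap.zero_apply,
        ContinuousLinearMap.coe_restrictScalars']
      have hproj : ∀ (k : Fin n) (x : EuclideanSpace ℂ (Fin n)),
          (EuclideanSpace.proj k : EuclideanSpace ℂ (Fin n) →L[ℂ] ℂ) x = x k := fun _ _ => rfl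
      simp only [hproj]
      rw [sub_eq_zero]
      have hlhs : (φ w i).re * (2 * (fderivWithin ℝ φ B w v i).re)
          + (φ w i).im * (2 * (fderivWithin ℝ φ B w v i).im)
          = 2 * ((starRingEnd ℂ) (φ w i) * fderivWithin ℝ φ B w v i).re := by
        simp [Complex.mul_re]
        ring
      rw [hlhs, hk, Finset.mul_sum]
      refine Finset.sum_congr rfl fun j _ => ?_
      simp [Complex.mul_re]
      ring
    rw [← hzero]
    have hfeq : (fun y : EuclideanSpace ℂ (Fin n) =>
        Complex.normSq (φ y i) - ∑ j, c j * Complex.normSq (y j))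
        = ((Complex.normSq ∘ fun y : EuclideanSpace ℂ (Fin n) => φ y i)
          - ∑ j, fun y : EuclideanSpace ℂ (Fin n) => c j * Complex.normSq (y j)) := by
      funext y; simp [Finset.sum_apply]
    rw [hfeq]
    exact hbig
  -- mean value: F is constant on B
  have hmv := hconv.norm_image_sub_le_of_norm_hasFDerivWithin_le (C := 0) hF
    (fun x _ => by simp) (Metric.mem_closedBall_self hr.le) hz
  rw [mul_comm, mul_zero] at hmv
  have hFz : Complex.normSq (φ z i) - ∑ j, c j * Complex.normSq (z j)
      = Complex.normSq (φ 0 i) - ∑ j, c j * Complex.normSq ((0 : EuclideanSpace ℂ (Fin n)) j) := by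
    have := norm_le_zero_iff.mp hmv
    exact sub_eq_zero.mp this
  have hF0 : Complex.normSq (φ 0 i) - ∑ j, c j
      * Complex.normSq ((0 : EuclideanSpace ℂ (Fin n)) j) = 0 := by
    rw [h0]
    have hz0 : ∀ j, Complex.normSq ((0 : EuclideanSpace ℂ (Fin n)) j) = 0 := by
      intro j
      show Complex.normSq 0 = 0
      simp
    simp [hz0]
  rw [hF0] at hFz
  have hfinal := sub_eq_zero.mp hFz
  rw [Complex.sq_norm, hfinal]
  refine Finset.sum_congr rfl fun j _ => ?_
  rw [Complex.sq_norm]
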